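/- arXiv:2103.08015 — 10 statements merged into one kernel-verified Lean document; each statement's English description precedes it below -/
import Mathlib

section
/- For every integer n ≥ 1 and every real (or polynomial variable) x, the Fibonacci polynomials F_n(x) and Chebyshev polynomials of the first kind T_n(x) satisfy F_n(x) = T_{n-1}(x) − Σ_{k=1}^{n-2} (x·T_{n-1-k}(x) − 2·T_{n-2-k}(x))·F_k(x). -/
/-- Chebyshev polynomials of the first kind. -/
def T : ℕ → ℝ → ℝ
  | 0, _ => 1
  | 1, x => x
  | (n+2), x => 2*x*T (n+1) x - T n x

/-- Chebyshev polynomials of the second kind. -/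
def U : ℕ → ℝ → ℝ
  | 0, _ => 1
  | 1, x => 2*x
  | (n+2), x => 2*x*U (n+1) x - U n x

/-- Fibonacci polynomials. -/
def F : ℕ → ℝ → ℝ
  | 0, _ => 0
  | 1, _ => 1
  | (n+2), x => x*F (n+1) x + F n x

/-- Balancing polynomials. -/
def B : ℕ → ℝ → ℝ
  | 0, _ => 0
  | 1, _ => 1
  | (n+2), x => 6*x*B (n+1) x - B n x

/-- Lucas-balancing polynomials. -/
def C : ℕ → ℝ → ℝ
  | 0, _ => 1
  | 1, x => 3*x
  | (n+2), x => 6*x*C (n+1) x - C n x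

/-- Lucas numbers. -/
def lucas : ℕ → ℤ
  | 0 => 2
  | 1 => 1
  | (n+2) => lucas (n+1) + lucas n

/-! With the generating functions `𝓕 = ∑ Fₙ tⁿ` and `𝓣 = ∑ Tₙ tⁿ`, the Fibonacci recurrence reads
`(1 - x t - t²) 𝓕 = t`. By the Chebyshev recurrence, `E = (1 - x t - t²) 𝓣` has coefficients
`1, 0, x T_{j+1} - 2 T_j (j ≥ 0)`, so `Fₙ` plus the sum in the theorem is the `n`-th coefficient of
`𝓕 E = 𝓣 (1 - x t - t²) 𝓕 = t 𝓣`, which is `T_{n-1}`. -/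

open PowerSeries Finset

noncomputable def seriesT (x : ℝ) : ℝ⟦X⟧ := mk (T · x)
noncomputable def seriesF (x : ℝ) : ℝ⟦X⟧ := mk (F · x)
noncomputable def fibDenom (x : ℝ) : ℝ⟦X⟧ := 1 - C x * X - X ^ 2

lemma coeff_fibDenom_mul (x : ℝ) (φ : ℝ⟦X⟧) (n : ℕ) :
    coeff (n + 2) (fibDenom x * φ) = coeff (n + 2) φ - x * coeff (n + 1) φ - coeff n φ := by
  simp [fibDenom, sub_mul, mul_assoc, coeff_X_pow_mul', coeff_succ_X_mul]

lemma fibDenom_mul_seriesF (x : ℝ) : fibDenom x * seriesF x = X := by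
  ext (_ | _ | n)
  · simp [fibDenom, seriesF, F]
  · simp [fibDenom, seriesF, sub_mul, mul_assoc, coeff_X_pow_mul', F]
  · rw [coeff_fibDenom_mul]
    simp [seriesF, F, coeff_X]

lemma coeff_fibDenom_mul_seriesT_add_two (x : ℝ) (j : ℕ) :
    coeff (j + 2) (fibDenom x * seriesT x) = x * T (j + 1) x - 2 * T j x := by
  rw [coeff_fibDenom_mul]
  simp only [seriesT, coeff_mk, T]
  ring

lemma coeff_seriesF_mul_fibDenom_mul_seriesT (x : ℝ) (m : ℕ) :
    coeff (m + 2) (seriesF x * (fibDenom x * seriesT x)) =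
      F (m + 2) x + ∑ k ∈ Icc 1 m, (x * T (m + 1 - k) x - 2 * T (m - k) x) * F k x := by
  rw [coeff_mul, Nat.sum_antidiagonal_eq_sum_range_succ (fun i j => coeff i (seriesF x) * coeff j _),
    sum_range_succ, sum_range_succ, range_eq_Ico, sum_eq_sum_Ico_succ_bot (by omega),
    Ico_add_one_right_eq_Icc]
  have hE₀ : coeff 0 (fibDenom x * seriesT x) = 1 := by simp [fibDenom, seriesT, T]
  have hE₁ : coeff 1 (fibDenom x * seriesT x) = 0 := by
    simp [fibDenom, seriesT, sub_mul, mul_assoc, coeff_X_pow_mul', T]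
  have hsum : ∀ k ∈ Icc 1 m, coeff k (seriesF x) * coeff (m + 2 - k) (fibDenom x * seriesT x)
      = (x * T (m + 1 - k) x - 2 * T (m - k) x) * F k x := by
    intro k hk
    rw [show m + 2 - k = m - k + 2 by grind, coeff_fibDenom_mul_seriesT_add_two,
      show m - k + 1 = m + 1 - k by grind, seriesF, coeff_mk, mul_comm]
  rw [sum_congr rfl hsum, Nat.sub_self, show m + 2 - (m + 1) = 1 by omega, hE₀, hE₁]
  simp only [seriesF, coeff_mk, F, tsub_zero, zero_mul, zero_add, mul_zero, add_zero, mul_one]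
  ring

theorem stmt0 (n : ℕ) (hn : 1 ≤ n) (x : ℝ) :
    F n x = T (n-1) x - ∑ k ∈ Finset.Icc 1 (n-2), (x * T (n-1-k) x - 2 * T (n-2-k) x) * F k x := by
  match n, hn with
  | 1, _ => simp [F, T]
  | m + 2, _ =>
    have key : seriesF x * (fibDenom x * seriesT x) = seriesT x * X := by
      rw [← fibDenom_mul_seriesF]
      ring
    have hcoeff := congrArg (coeff (m + 2)) key
    rw [coeff_seriesF_mul_fibDenom_mul_seriesT, coeff_succ_mul_X, seriesT, coeff_mk] at hcoeff
    simp only [Nat.add_sub_cancel, show m + 2 - 1 = m + 1 by omega]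
    linarith
end

section
/- For every integer n ≥ 1 and every real x, F_n(x) + x·F_{n-1}(x) = U_{n-1}(x) − Σ_{k=1}^{n-2} (x·U_{n-1-k}(x) − 2·U_{n-2-k}(x))·F_k(x). -/
/-!
The sum is a convolution `∑ a (n - k) F_k` whose weights `a j = x U_j - 2 U_{j-1}` obey the
Chebyshev recurrence `a (j + 2) = 2x a (j + 1) - a j` (for `j ≥ 1`). Hence the sum obeys the same
recurrence in `n` up to boundary terms `a 1 F_{n+1} - x F_n`, and these are exactly the defect of
`F_{n+1} + x F_n` from the Chebyshev recurrence. So both sides of the identity satisfy one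
two-step recurrence and agree at the two initial values.
-/

open Finset

-- The weight `a 0` never occurs.
def seqConv {R : Type*} [CommRing R] (a b : ℕ → R) (n : ℕ) : R :=
  ∑ k ∈ range n, a (n - k) * b k

theorem seqConv_add_two {R : Type*} [CommRing R] (x : R) (a b : ℕ → R)
    (ha : ∀ j, a (j + 3) = 2 * x * a (j + 2) - a (j + 1)) (n : ℕ) :
    seqConv a b (n + 2) = 2 * x * seqConv a b (n + 1) - seqConv a b n
      + a 1 * b (n + 1) + (a 2 - 2 * x * a 1) * b n := by
  have hinner : ∑ k ∈ range n, a (n + 2 - k) * b k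
      = 2 * x * ∑ k ∈ range n, a (n + 1 - k) * b k - seqConv a b n := by
    rw [seqConv, mul_sum, ← sum_sub_distrib]
    refine sum_congr rfl fun k hk => ?_
    obtain ⟨j, rfl⟩ := Nat.exists_eq_add_of_lt (mem_range.mp hk)
    rw [show k + j + 1 + 2 - k = j + 3 by omega, show k + j + 1 + 1 - k = j + 2 by omega,
      show k + j + 1 - k = j + 1 by omega, ha]
    ring
  simp only [seqConv, sum_range_succ, hinner, Nat.add_sub_cancel_left,
    show n + 2 - (n + 1) = 1 by omega]
  ring

theorem U_add_two (n : ℕ) (x : ℝ) : U (n + 2) x = 2 * x * U (n + 1) x - U n x := rfl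

theorem F_add_two (n : ℕ) (x : ℝ) : F (n + 2) x = x * F (n + 1) x + F n x := rfl

-- The value at `j = 0` (where `j - 1` truncates) is junk; `seqConv` never reads it.
def chebWeight (x : ℝ) (j : ℕ) : ℝ := x * U j x - 2 * U (j - 1) x

theorem chebWeight_add_three (x : ℝ) (j : ℕ) :
    chebWeight x (j + 3) = 2 * x * chebWeight x (j + 2) - chebWeight x (j + 1) := by
  simp only [chebWeight, show j + 3 - 1 = j + 2 by omega, show j + 2 - 1 = j + 1 by omega,
    Nat.add_sub_cancel, show j + 3 = j + 1 + 2 from rfl, U_add_two]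
  ring

theorem fib_add_mul_fib_eq (x : ℝ) (n : ℕ) :
    F (n + 1) x + x * F n x = U n x - seqConv (chebWeight x) (F · x) n := by
  induction n using Nat.twoStepInduction with
  | zero => simp [F, U, seqConv]
  | one => simp [F, U, seqConv]; ring
  | more n ih₀ ih₁ =>
    rw [seqConv_add_two x _ _ (chebWeight_add_three x) n]
    simp only [chebWeight, F_add_two, U, Nat.add_one_sub_one, Nat.sub_self] at *
    linear_combination 2 * x * ih₁ - ih₀

theorem stmt1 (n : ℕ) (hn : 1 ≤ n) (x : ℝ) :
    F n x + x * F (n-1) x = U (n-1) x - ∑ k ∈ Finset.Icc 1 (n-2), (x * U (n-1-k) x - 2 * U (n-2-k) x) * F k x := by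
  obtain ⟨m, rfl⟩ := Nat.exists_eq_add_of_le' hn
  have hsum : ∑ k ∈ Icc 1 (m + 1 - 2), (x * U (m + 1 - 1 - k) x - 2 * U (m + 1 - 2 - k) x) * F k x
      = seqConv (chebWeight x) (F · x) m := by
    rw [seqConv]
    refine sum_subset (fun k hk => ?_) (fun k _ hk => ?_) |>.trans (sum_congr rfl fun k _ => ?_)
    · simp only [mem_Icc, mem_range] at hk ⊢; omega
    · obtain rfl : k = 0 := by simp only [mem_Icc, mem_range] at *; omega
      simp [F]
    · rw [chebWeight, show m + 1 - 1 - k = m - k by omega, show m + 1 - 2 - k = m - k - 1 by omega]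
  rw [hsum, Nat.add_sub_cancel]
  exact fib_add_mul_fib_eq x m
end

section
/- For every integer n ≥ 1 and every real x, x·(F_{2n+1}(x) − F_{2n-1}(x)) = T_{2n+1}(x) − T_{2n-1}(x) − (3x²−4)·Σ_{k=0}^{n-1} F_{2k+1}(x)·T_{2(n-k)-1}(x). -/
/-!
Put `a k = F (2k+1) x` and `b k = T (2k+1) x`. Both satisfy `u (k+2) = c * u (k+1) - u k`, with
`c = p = x^2 + 2` for `a` and `c = q = 4x^2 - 2` for `b`, so their generating functions are
`A = N_A / (1 - pz + z^2)` and `B = N_B / (1 - qz + z^2)` with linear numerators `N_A`, `N_B`.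
The denominators differ by `(p - q) z`, whence `(p - q) z A B = N_B A - N_A B`. The sum in the
theorem is the coefficient of `z^(n-1)` in `A B` and `p - q = -(3x^2 - 4)`.
-/

open Finset

section Convolution

variable {R : Type*} [CommRing R] {a b : ℕ → R} {p q : R}

theorem add_four_of_recurrence {u : ℕ → R} {s r : R}
    (hu : ∀ n, u (n + 2) = s * u (n + 1) + r * u n) (n : ℕ) :
    u (n + 4) = (s ^ 2 + 2 * r) * u (n + 2) - r ^ 2 * u n := by
  linear_combination hu (n + 2) + s * hu (n + 1) - r * hu n

theorem sum_antidiagonal_add_two_of_recurrence (hb : ∀ n, b (n + 2) = q * b (n + 1) - b n)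
    (n : ℕ) :
    ∑ ij ∈ antidiagonal (n + 2), a ij.1 * b ij.2 =
      q * ∑ ij ∈ antidiagonal (n + 1), a ij.1 * b ij.2 - ∑ ij ∈ antidiagonal n, a ij.1 * b ij.2
        + a (n + 2) * b 0 + a (n + 1) * (b 1 - q * b 0) := by
  simp only [Nat.sum_antidiagonal_succ' (n := n + 1), Nat.sum_antidiagonal_succ' (n := n), hb,
    mul_sub, sum_sub_distrib, ← mul_sum, mul_left_comm _ q]
  ring

theorem sub_mul_sum_antidiagonal_of_recurrence (ha : ∀ n, a (n + 2) = p * a (n + 1) - a n)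
    (hb : ∀ n, b (n + 2) = q * b (n + 1) - b n) (n : ℕ) :
    (p - q) * ∑ ij ∈ antidiagonal n, a ij.1 * b ij.2 =
      b 0 * a (n + 1) + (b 1 - q * b 0) * a n - a 0 * b (n + 1) - (a 1 - p * a 0) * b n := by
  induction n using Nat.twoStepInduction with
  | zero => simp only [Nat.antidiagonal_zero, sum_singleton]; ring
  | one =>
    simp only [Nat.sum_antidiagonal_succ', Nat.antidiagonal_zero, sum_singleton, ha 0, hb 0]
    ring
  | more n ih₀ ih₁ =>
    have ha₂ : a (n + 2 + 1) = p * a (n + 2) - a (n + 1) := ha (n + 1)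
    have hb₂ : b (n + 2 + 1) = q * b (n + 2) - b (n + 1) := hb (n + 1)
    rw [show n + 1 + 1 = n + 2 from rfl] at ih₁
    rw [sum_antidiagonal_add_two_of_recurrence hb]
    linear_combination q * ih₁ - ih₀ - b 0 * ha₂ - (b 1 - q * b 0) * ha n + a 0 * hb₂
      + (a 1 - p * a 0) * hb n

end Convolution

theorem F_odd_add_two (k : ℕ) (x : ℝ) :
    F (2 * (k + 2) + 1) x = (x ^ 2 + 2) * F (2 * (k + 1) + 1) x - F (2 * k + 1) x := by
  rw [show 2 * (k + 2) + 1 = 2 * k + 1 + 4 by ring,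
    add_four_of_recurrence (u := (F · x)) (s := x) (r := 1) (fun n => by rw [F]; ring)]
  ring_nf

theorem T_odd_add_two (k : ℕ) (x : ℝ) :
    T (2 * (k + 2) + 1) x = (4 * x ^ 2 - 2) * T (2 * (k + 1) + 1) x - T (2 * k + 1) x := by
  rw [show 2 * (k + 2) + 1 = 2 * k + 1 + 4 by ring,
    add_four_of_recurrence (u := (T · x)) (s := 2 * x) (r := -1) (fun n => by rw [T]; ring)]
  ring_nf

theorem stmt2 (n : ℕ) (hn : 1 ≤ n) (x : ℝ) :
    x * (F (2*n+1) x - F (2*n-1) x) =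
      T (2*n+1) x - T (2*n-1) x - (3*x^2 - 4) * ∑ k ∈ Finset.range n, F (2*k+1) x * T (2*(n-k)-1) x := by
  obtain ⟨m, rfl⟩ : ∃ m, n = m + 1 := ⟨n - 1, by omega⟩
  have hsum : ∑ k ∈ range (m + 1), F (2 * k + 1) x * T (2 * (m + 1 - k) - 1) x =
      ∑ ij ∈ antidiagonal m, F (2 * ij.1 + 1) x * T (2 * ij.2 + 1) x := by
    rw [Nat.sum_antidiagonal_eq_sum_range_succ (fun i j => F (2 * i + 1) x * T (2 * j + 1) x)]
    refine sum_congr rfl fun k hk => ?_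
    rw [show 2 * (m + 1 - k) - 1 = 2 * (m - k) + 1 by have := mem_range.1 hk; omega]
  have hconv := sub_mul_sum_antidiagonal_of_recurrence (a := fun k => F (2 * k + 1) x)
    (b := fun k => T (2 * k + 1) x) (F_odd_add_two · x) (T_odd_add_two · x) m
  rw [show 2 * (m + 1) - 1 = 2 * m + 1 by omega, hsum]
  simp only [T, F, one_mul, mul_one, add_zero] at hconv ⊢
  linear_combination -hconv
end

section
/- For every integer n ≥ 1 and every real x, 2x·F_{2n+1}(x) = U_{2n+1}(x) − U_{2n-1}(x) − (3x²−4)·Σ_{k=0}^{n-1} F_{2k+1}(x)·U_{2(n-k)-1}(x). -/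
/-! Multiplying the convolution of two sequences with `a (n+2) = α a (n+1) - a n` and
`b (n+2) = β b (n+1) - b n` by `β - α` telescopes to boundary terms; in generating functions,
`(β - α) t = (1 - α t + t²) - (1 - β t + t²)`. The odd-indexed `F` and `U` satisfy such recurrences
with `α = x² + 2` and `β = 4x² - 2`, so `β - α = 3x² - 4`, and the boundary terms only involve
`F_{-1} = α F_1 - F_3 = 1` and `U_{-1} = β U_1 - U_3 = 0`. -/

open Finset

theorem sub_mul_sum_antidiagonal_eq_of_recurrence {R : Type*} [CommRing R] {α β : R}
    {a b : ℕ → R} (ha : ∀ n, a (n + 2) = α * a (n + 1) - a n)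
    (hb : ∀ n, b (n + 2) = β * b (n + 1) - b n) (m : ℕ) :
    (β - α) * ∑ p ∈ antidiagonal m, a p.1 * b p.2 =
      a 0 * b (m + 1) - a (m + 1) * b 0 + a m * (β * b 0 - b 1) - (α * a 0 - a 1) * b m := by
  induction m generalizing a with
  | zero =>
    simp only [Nat.antidiagonal_zero, sum_singleton]
    ring
  | succ m ih =>
    have shifted := ih (a := fun n => a (n + 1)) fun n => ha (n + 1)
    simp only [zero_add, Nat.reduceAdd] at shifted
    rw [Nat.sum_antidiagonal_succ]
    linear_combination shifted - a 0 * hb m + b m * ha 0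

theorem F_odd_recurrence (n : ℕ) (x : ℝ) :
    F (2 * (n + 2) + 1) x = (x ^ 2 + 2) * F (2 * (n + 1) + 1) x - F (2 * n + 1) x := by
  rw [show 2 * (n + 2) + 1 = 2 * n + 1 + 4 by ring, show 2 * (n + 1) + 1 = 2 * n + 1 + 2 by ring]
  simp only [F]
  ring

theorem U_odd_recurrence (n : ℕ) (x : ℝ) :
    U (2 * (n + 2) + 1) x = (4 * x ^ 2 - 2) * U (2 * (n + 1) + 1) x - U (2 * n + 1) x := by
  rw [show 2 * (n + 2) + 1 = 2 * n + 1 + 4 by ring, show 2 * (n + 1) + 1 = 2 * n + 1 + 2 by ring]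
  simp only [U]
  ring

theorem stmt3 (n : ℕ) (hn : 1 ≤ n) (x : ℝ) :
    2*x * F (2*n+1) x =
      U (2*n+1) x - U (2*n-1) x - (3*x^2 - 4) * ∑ k ∈ Finset.range n, F (2*k+1) x * U (2*(n-k)-1) x := by
  obtain ⟨m, rfl⟩ : ∃ m, n = m + 1 := ⟨n - 1, by omega⟩
  have hsum : ∑ k ∈ range (m + 1), F (2*k+1) x * U (2*(m+1-k)-1) x =
      ∑ p ∈ antidiagonal m, F (2 * p.1 + 1) x * U (2 * p.2 + 1) x := by
    rw [Nat.sum_antidiagonal_eq_sum_range_succ_mk]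
    refine sum_congr rfl fun k hk => ?_
    rw [show 2 * (m + 1 - k) - 1 = 2 * (m - k) + 1 by have := mem_range.1 hk; omega]
  have telescoped := sub_mul_sum_antidiagonal_eq_of_recurrence (a := fun k => F (2 * k + 1) x)
    (b := fun k => U (2 * k + 1) x) (F_odd_recurrence · x) (U_odd_recurrence · x) m
  norm_num [F, U] at telescoped
  rw [hsum, show 2 * (m + 1) - 1 = 2 * m + 1 by omega]
  linear_combination telescoped
end

section
/- For every integer n ≥ 1 and every real x, x²·F_{2n-1}(x) = x·T_{2n-1}(x) − (3x²−4)·Σ_{k=1}^{n-1} T_{2(n-k)-1}(x)·F_{2k}(x). -/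
/-!
Both `i ↦ F (2i) x` and `i ↦ T (2i+1) x` satisfy recurrences `w (i+2) = c · w (i+1) - w i`, with
`c = x² + 2` and `c = 4x² - 2` respectively. For any two such sequences `u`, `v` with constants
`a`, `b`, the convolution `S m = ∑_{i+j=m} u i v j` satisfies the recurrence of `u` up to boundary
terms in `v`, and the recurrence of `v` up to boundary terms in `u`. Subtracting the two expresses
`(a - b) · S m` through `u m`, `u (m+1)`, `v m`, `v (m+1)` alone. Here `a - b = -(3x² - 4)`, and
the boundary terms collapse to `x (F (2m+2) - F (2m)) - x T (2m+1) = x² F (2m+1) - x T (2m+1)`.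
-/

open Finset Finset.Nat

section Convolution

variable {R : Type*} [CommRing R]

theorem sum_antidiagonal_add_two_of_recurrence_s6 {u : ℕ → R} {a : R}
    (hu : ∀ i, u (i + 2) = a * u (i + 1) - u i) (v : ℕ → R) (m : ℕ) :
    ∑ p ∈ antidiagonal (m + 2), u p.1 * v p.2 =
      a * ∑ p ∈ antidiagonal (m + 1), u p.1 * v p.2 - ∑ p ∈ antidiagonal m, u p.1 * v p.2
        + u 0 * v (m + 2) + (u 1 - a * u 0) * v (m + 1) := by
  have hshift : ∑ p ∈ antidiagonal m, u (p.1 + 2) * v p.2 =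
      a * ∑ p ∈ antidiagonal m, u (p.1 + 1) * v p.2 - ∑ p ∈ antidiagonal m, u p.1 * v p.2 := by
    simp only [hu, sub_mul, mul_assoc, sum_sub_distrib, mul_sum]
  rw [sum_antidiagonal_succ, sum_antidiagonal_succ, hshift,
    sum_antidiagonal_succ (f := fun p => u p.1 * v p.2)]
  ring

theorem sub_mul_sum_antidiagonal_of_recurrences {u v : ℕ → R} {a b : R}
    (hu : ∀ i, u (i + 2) = a * u (i + 1) - u i) (hv : ∀ i, v (i + 2) = b * v (i + 1) - v i)
    (m : ℕ) :
    (a - b) * ∑ p ∈ antidiagonal m, u p.1 * v p.2 =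
      v 0 * u (m + 1) + (v 1 - b * v 0) * u m - u 0 * v (m + 1) - (u 1 - a * u 0) * v m := by
  have hswap : ∀ n, ∑ p ∈ antidiagonal n, u p.1 * v p.2 = ∑ p ∈ antidiagonal n, v p.1 * u p.2 :=
    fun n => by rw [← sum_antidiagonal_swap]; simp only [Prod.fst_swap, Prod.snd_swap, mul_comm]
  cases m with
  | zero => simp only [antidiagonal_zero, sum_singleton]; ring
  | succ m =>
    have hu' := sum_antidiagonal_add_two_of_recurrence_s6 hu v m
    have hv' := sum_antidiagonal_add_two_of_recurrence_s6 hv u m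
    simp only [← hswap] at hv'
    linear_combination hv' - hu'

end Convolution

theorem T_add_four (j : ℕ) (x : ℝ) : T (j + 4) x = (4 * x ^ 2 - 2) * T (j + 2) x - T j x := by
  simp only [T]; ring

theorem F_add_four (j : ℕ) (x : ℝ) : F (j + 4) x = (x ^ 2 + 2) * F (j + 2) x - F j x := by
  simp only [F]; ring

theorem sum_Icc_F_even_mul_T_odd (m : ℕ) (x : ℝ) :
    (3 * x ^ 2 - 4) * ∑ k ∈ Icc 1 m, F (2 * k) x * T (2 * (m - k) + 1) x =
      x * T (2 * m + 1) x - x ^ 2 * F (2 * m + 1) x := by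
  have hF (i : ℕ) : F (2 * (i + 2)) x = (x ^ 2 + 2) * F (2 * (i + 1)) x - F (2 * i) x :=
    F_add_four (2 * i) x
  have hT (i : ℕ) :
      T (2 * (i + 2) + 1) x = (4 * x ^ 2 - 2) * T (2 * (i + 1) + 1) x - T (2 * i + 1) x :=
    T_add_four (2 * i + 1) x
  have hsum : ∑ k ∈ Icc 1 m, F (2 * k) x * T (2 * (m - k) + 1) x =
      ∑ p ∈ antidiagonal m, F (2 * p.1) x * T (2 * p.2 + 1) x := by
    rw [sum_antidiagonal_eq_sum_range_succ (fun i j => F (2 * i) x * T (2 * j + 1) x)]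
    refine sum_subset (fun k hk => by simp only [mem_Icc, mem_range] at hk ⊢; omega)
      fun k hk hk' => ?_
    obtain rfl : k = 0 := by simp only [mem_Icc, mem_range] at hk hk'; omega
    simp [F]
  have hFodd : F (2 * (m + 1)) x = x * F (2 * m + 1) x + F (2 * m) x := by
    rw [show 2 * (m + 1) = 2 * m + 2 by ring, F]
  have hconv := sub_mul_sum_antidiagonal_of_recurrences
    (u := fun i => F (2 * i) x) (v := fun i => T (2 * i + 1) x) hF hT m
  norm_num [T, F] at hconv
  rw [hsum]
  linear_combination -hconv - x * hFodd

theorem stmt6 (n : ℕ) (hn : 1 ≤ n) (x : ℝ) :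
    x^2 * F (2*n-1) x =
      x * T (2*n-1) x - (3*x^2 - 4) * ∑ k ∈ Finset.Icc 1 (n-1), T (2*(n-k)-1) x * F (2*k) x := by
  obtain ⟨m, rfl⟩ : ∃ m, n = m + 1 := ⟨n - 1, by omega⟩
  have hsum : ∑ k ∈ Icc 1 m, T (2 * (m + 1 - k) - 1) x * F (2 * k) x =
      ∑ k ∈ Icc 1 m, F (2 * k) x * T (2 * (m - k) + 1) x :=
    sum_congr rfl fun k hk => by
      rw [mul_comm, show 2 * (m + 1 - k) - 1 = 2 * (m - k) + 1 by simp only [mem_Icc] at hk; omega]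
  rw [show 2 * (m + 1) - 1 = 2 * m + 1 by omega, Nat.add_sub_cancel, hsum,
    sum_Icc_F_even_mul_T_odd]
  ring
end

section
/- For every integer n ≥ 1 and every real x, F_{2n}(x) = x·U_{n-1}(x) + (x²−2x+2)·Σ_{k=1}^{n-1} U_{n-1-k}(x)·F_{2k}(x). -/
/-!
Both sides satisfy the recurrence `f (m+2) = (x^2+2) f (m+1) - f m` of the even-indexed Fibonacci
polynomials `F (2*(m+1))`. For the right-hand side this is because convolving a sequence `a` with
`U` turns `a` into a solution of the Chebyshev recurrence `c (m+2) = 2x c (m+1) - c m + a (m+2)`,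
and `2x + (x^2 - 2x + 2) = x^2 + 2`.
-/

lemma F_two_mul_add_two_add_two (m : ℕ) (x : ℝ) :
    F (2*(m+2)) x = (x^2+2) * F (2*(m+1)) x - F (2*m) x := by
  have h4 : F (2*m+4) x = x * F (2*m+3) x + F (2*m+2) x := rfl
  have h3 : F (2*m+3) x = x * F (2*m+2) x + F (2*m+1) x := rfl
  have h2 : F (2*m+2) x = x * F (2*m+1) x + F (2*m) x := rfl
  rw [show 2*(m+2) = 2*m+4 by ring, show 2*(m+1) = 2*m+2 by ring]
  linear_combination h4 + x * h3 - h2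

lemma sum_Icc_U_mul_add_two (a : ℕ → ℝ) (m : ℕ) (x : ℝ) :
    ∑ k ∈ Finset.Icc 1 (m+2), U (m+2-k) x * a k
      = 2*x * ∑ k ∈ Finset.Icc 1 (m+1), U (m+1-k) x * a k
        - ∑ k ∈ Finset.Icc 1 m, U (m-k) x * a k + a (m+2) := by
  have hrec : ∑ k ∈ Finset.Icc 1 m, U (m+2-k) x * a k
      = 2*x * ∑ k ∈ Finset.Icc 1 m, U (m+1-k) x * a k
        - ∑ k ∈ Finset.Icc 1 m, U (m-k) x * a k := by
    rw [Finset.mul_sum, ← Finset.sum_sub_distrib]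
    refine Finset.sum_congr rfl fun k hk => ?_
    obtain ⟨j, rfl⟩ : ∃ j, m = j + k := ⟨m - k, by grind⟩
    rw [show j + k + 2 - k = j + 2 by omega, show j + k + 1 - k = j + 1 by omega,
      Nat.add_sub_cancel, U]
    ring
  rw [Finset.sum_Icc_succ_top (by omega), Finset.sum_Icc_succ_top (by omega),
    Finset.sum_Icc_succ_top (by omega), hrec, Nat.sub_self, Nat.sub_self,
    show m + 2 - (m + 1) = 1 by omega]
  simp only [U]
  ring

lemma F_two_mul_add_two (m : ℕ) (x : ℝ) :
    F (2*(m+1)) x = x * U m x + (x^2-2*x+2) * ∑ k ∈ Finset.Icc 1 m, U (m-k) x * F (2*k) x := by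
  induction m using Nat.twoStepInduction with
  | zero => simp [F, U]
  | one => simp [F, U]; ring
  | more m ih0 ih1 =>
    rw [show m + 1 + 1 = m + 2 from rfl] at ih1
    rw [sum_Icc_U_mul_add_two, U, F_two_mul_add_two_add_two (m+1)]
    linear_combination 2*x*ih1 - ih0

theorem stmt10 (n : ℕ) (hn : 1 ≤ n) (x : ℝ) :
    F (2*n) x =
      x * U (n-1) x + (x^2 - 2*x + 2) * ∑ k ∈ Finset.Icc 1 (n-1), U (n-1-k) x * F (2*k) x := by
  obtain ⟨m, rfl⟩ : ∃ m, n = m + 1 := ⟨n-1, by omega⟩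
  simpa using F_two_mul_add_two m x
end

section
/- For every integer n ≥ 1 and every real x, F_n(3x) + 3x·F_{n-1}(3x) = B_n(x) − Σ_{k=1}^{n-2} (3x·B_{n-k}(x) − 2·B_{n-k-1}(x))·F_k(3x), where B_m(x) denotes the balancing polynomials. -/
/-! Write `y = 3x`, so that `B_{m+1}(x) = 2y B_m(x) - B_{m-1}(x)` and `F_{k+1}(y) = y F_k(y) + F_{k-1}(y)`.
For `V_k = B_{n+1-k}(x) F_k(y) + B_{n-k}(x) F_{k-1}(y)` these two recurrences give
`(y B_{n-k} - 2 B_{n-k-1}) F_k = V_k - V_{k+1}`, so the sum over `1 ≤ k ≤ n-1` telescopes to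
`V_1 - V_n = B_n - F_n`. Its last term, `k = n-1`, is `y F_{n-1}`. -/

lemma balancing_mul_fibonacci_telescope (x : ℝ) (i l : ℕ) :
    (3 * x * B (i + 1) x - 2 * B i x) * F (l + 1) (3 * x) =
      (B (i + 2) x * F (l + 1) (3 * x) + B (i + 1) x * F l (3 * x)) -
        (B (i + 1) x * F (l + 2) (3 * x) + B i x * F (l + 1) (3 * x)) := by
  rw [B, F]
  ring

theorem balancing_eq_fibonacci_add_sum (n : ℕ) (x : ℝ) :
    B n x = F n (3 * x) +
      ∑ k ∈ Finset.Ico 1 n, (3 * x * B (n - k) x - 2 * B (n - k - 1) x) * F k (3 * x) := by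
  rcases Nat.eq_zero_or_pos n with rfl | hn
  · simp [B, F]
  set V : ℕ → ℝ := fun k => B (n + 1 - k) x * F k (3 * x) + B (n - k) x * F (k - 1) (3 * x)
  have hV1 : V 1 = B n x := by simp [V, F]
  have hVn : V n = F n (3 * x) := by simp [V, B]
  have hstep : ∀ k ∈ Finset.Ico 1 n,
      (3 * x * B (n - k) x - 2 * B (n - k - 1) x) * F k (3 * x) = -(V (k + 1) - V k) := by
    intro k hk
    obtain ⟨hk1, hkn⟩ := Finset.mem_Ico.mp hk
    obtain ⟨i, hi⟩ : ∃ i, n - k = i + 1 := ⟨n - k - 1, by omega⟩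
    obtain ⟨l, rfl⟩ : ∃ l, k = l + 1 := ⟨k - 1, by omega⟩
    simp only [V, hi, show n + 1 - (l + 1) = i + 2 by omega, show n - (l + 1 + 1) = i by omega,
      show n + 1 - (l + 1 + 1) = i + 1 by omega, Nat.add_sub_cancel]
    rw [balancing_mul_fibonacci_telescope]
    ring
  rw [Finset.sum_congr rfl hstep, Finset.sum_neg_distrib, Finset.sum_Ico_sub (f := V) hn, hV1, hVn]
  ring

theorem stmt13_general (n : ℕ) (x : ℝ) :
    F n (3*x) + 3*x * F (n-1) (3*x) =
      B n x - ∑ k ∈ Finset.Icc 1 (n-2), (3*x * B (n-k) x - 2 * B (n-k-1) x) * F k (3*x) := by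
  rcases n with _ | _ | m
  · simp [B, F]
  · simp [B, F]
  rw [balancing_eq_fibonacci_add_sum, Finset.sum_Ico_succ_top (by omega),
    Finset.Ico_add_one_right_eq_Icc, show m + 1 + 1 - 2 = m from rfl]
  simp only [Nat.add_sub_cancel, Nat.add_sub_cancel_left, Nat.sub_self, B, F]
  ring

theorem stmt13 (n : ℕ) (hn : 1 ≤ n) (x : ℝ) :
    F n (3*x) + 3*x * F (n-1) (3*x) =
      B n x - ∑ k ∈ Finset.Icc 1 (n-2), (3*x * B (n-k) x - 2 * B (n-k-1) x) * F k (3*x) :=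
  stmt13_general n x
end

section
/- For every integer n ≥ 1, 15·F_{4n} = 12·(4^n − 4^{−n}) + 11·Σ_{k=1}^{n-1} (4^k − 4^{−k})·F_{4(n−k)}, where F_m denotes the m-th Fibonacci number (identity in the rationals, or equivalently after clearing denominators by 4^n). -/
/-!
Both sides satisfy the recurrence `u (n + 2) = 7 u (n + 1) - u n` of `F_{4n}` and agree at
`n = 0, 1`. With `g k = 4^k - 4^(-k)`, the sum is the Cauchy product of `g` and `k ↦ F_{4k}`
(its terms `k = 0` and `k = n` vanish). Peeling off its two top terms shows that this product
satisfies the recurrence up to the error `F_4 g (n + 1) = 3 g (n + 1)`, and the `12 g` term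
cancels it because `g (n + 2) = 17/4 g (n + 1) - g n`.
-/

open Finset

theorem Nat.fib_add_eight_add_fib (m : ℕ) :
    Nat.fib (m + 8) + Nat.fib m = 7 * Nat.fib (m + 4) := by
  simp only [Nat.fib_add_two]
  ring

section CauchyProduct

variable {R : Type*} [CommRing R]

def cauchyProduct (a b : ℕ → R) (n : ℕ) : R := ∑ x ∈ antidiagonal n, a x.1 * b x.2

theorem cauchyProduct_add_two {a b : ℕ → R} {p q : R}
    (hb : ∀ n, b (n + 2) = p * b (n + 1) + q * b n) (n : ℕ) :
    cauchyProduct a b (n + 2) = p * cauchyProduct a b (n + 1) + q * cauchyProduct a b n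
      + a (n + 2) * b 0 + a (n + 1) * (b 1 - p * b 0) := by
  have hsum : ∑ x ∈ antidiagonal n, a x.1 * b (x.2 + 1 + 1)
      = p * ∑ x ∈ antidiagonal n, a x.1 * b (x.2 + 1)
        + q * ∑ x ∈ antidiagonal n, a x.1 * b x.2 := by
    rw [mul_sum, mul_sum, ← sum_add_distrib]
    exact sum_congr rfl fun x _ => by rw [hb]; ring
  simp only [cauchyProduct, Nat.sum_antidiagonal_succ' (n := n + 1),
    Nat.sum_antidiagonal_succ' (n := n), hsum]
  ring

theorem cauchyProduct_eq_sum_Icc {a b : ℕ → R} (ha : a 0 = 0) (hb : b 0 = 0) (n : ℕ) :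
    cauchyProduct a b n = ∑ k ∈ Icc 1 (n - 1), a k * b (n - k) := by
  rw [cauchyProduct, Nat.sum_antidiagonal_eq_sum_range_succ_mk]
  symm
  refine sum_subset (fun k hk => ?_) (fun k hk hk' => ?_)
  · simp only [mem_Icc, mem_range] at hk ⊢
    omega
  · simp only [mem_Icc, mem_range, not_and_or, not_le] at hk hk'
    obtain rfl | rfl : k = 0 ∨ k = n := by omega
    · simp [ha]
    · simp [hb]

end CauchyProduct

def fibFour (n : ℕ) : ℚ := Nat.fib (4 * n)

def fourPowSub (n : ℕ) : ℚ := (4 : ℚ) ^ (n : ℤ) - (4 : ℚ) ^ (-(n : ℤ))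

theorem fibFour_add_two (n : ℕ) : fibFour (n + 2) = 7 * fibFour (n + 1) - fibFour n := by
  have h := Nat.fib_add_eight_add_fib (4 * n)
  rw [fibFour, fibFour, fibFour, show 4 * (n + 2) = 4 * n + 8 by ring,
    show 4 * (n + 1) = 4 * n + 4 by ring, eq_sub_iff_add_eq]
  exact_mod_cast h

theorem fourPowSub_add_two (n : ℕ) :
    fourPowSub (n + 2) = 17 / 4 * fourPowSub (n + 1) - fourPowSub n := by
  simp only [fourPowSub, zpow_neg, zpow_natCast]
  field_simp
  ring

def fibFourRecurrence : LinearRecurrence ℚ := ⟨2, ![-1, 7]⟩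

theorem fibFourRecurrence_isSolution_iff (u : ℕ → ℚ) :
    fibFourRecurrence.IsSolution u ↔ ∀ n, u (n + 2) = 7 * u (n + 1) - u n := by
  change (∀ n, u (n + 2) = ∑ i : Fin 2, ![(-1 : ℚ), 7] i * u (n + i)) ↔ _
  refine forall_congr' fun n => ?_
  rw [Fin.sum_univ_two, Matrix.cons_val_zero, Matrix.cons_val_one, Matrix.cons_val_zero,
    Fin.val_zero, Fin.val_one, add_zero]
  ring_nf

theorem fifteen_mul_fibFour (n : ℕ) :
    15 * fibFour n = 12 * fourPowSub n + 11 * cauchyProduct fourPowSub fibFour n := by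
  have hf0 : fibFour 0 = 0 := by simp [fibFour]
  have hf1 : fibFour 1 = 3 := by norm_num [fibFour, Nat.fib_add_two]
  have hlhs : fibFourRecurrence.IsSolution fun n => 15 * fibFour n := by
    rw [fibFourRecurrence_isSolution_iff]
    intro n
    rw [fibFour_add_two]
    ring
  have hrhs : fibFourRecurrence.IsSolution
      fun n => 12 * fourPowSub n + 11 * cauchyProduct fourPowSub fibFour n := by
    rw [fibFourRecurrence_isSolution_iff]
    intro n
    rw [cauchyProduct_add_two (p := 7) (q := -1) (fun n => by rw [fibFour_add_two]; ring),
      fourPowSub_add_two, hf0, hf1]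
    ring
  refine congrFun ((fibFourRecurrence.eq_iff_eqOn_range_order _ _ hlhs hrhs).2 ?_) n
  intro k hk
  obtain rfl | rfl : k = 0 ∨ k = 1 := by simp [fibFourRecurrence] at hk; omega
  · simp [fourPowSub, cauchyProduct, hf0]
  · norm_num [fourPowSub, cauchyProduct, Nat.sum_antidiagonal_succ, hf0, hf1]

theorem stmt15_general (n : ℕ) :
    15 * (Nat.fib (4*n) : ℚ) =
      12 * ((4:ℚ)^(n:ℤ) - (4:ℚ)^(-(n:ℤ))) +
        11 * ∑ k ∈ Finset.Icc 1 (n-1), ((4:ℚ)^(k:ℤ) - (4:ℚ)^(-(k:ℤ))) * (Nat.fib (4*(n-k)) : ℚ) := by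
  have h := fifteen_mul_fibFour n
  rwa [cauchyProduct_eq_sum_Icc (by simp [fourPowSub]) (by simp [fibFour])] at h

theorem stmt15 (n : ℕ) (hn : 1 ≤ n) :
    15 * (Nat.fib (4*n) : ℚ) =
      12 * ((4:ℚ)^(n:ℤ) - (4:ℚ)^(-(n:ℤ))) +
        11 * ∑ k ∈ Finset.Icc 1 (n-1), ((4:ℚ)^(k:ℤ) - (4:ℚ)^(-(k:ℤ))) * (Nat.fib (4*(n-k)) : ℚ) :=
  stmt15_general n
end

section
/- For every integer n ≥ 1, 3·L_{2n−2} = 4^n + 8·4^{−n} − Σ_{k=0}^{n-1} (4^k − 4^{−k})·L_{2(n−k−1)}, where L_m denotes the m-th Lucas number (identity in the rationals). -/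
/-! The sum is the difference of the convolutions of `a m = L_{2m}` with the geometric
sequences `4 ^ k` and `4⁻¹ ^ k`. Since `a (m + 2) = 3 a (m + 1) - a m`, multiplying such a
convolution by the characteristic polynomial `x ^ 2 - 3 x + 1` (equal to `5` at `x = 4` and to
`5 / 16` at `x = 1 / 4`) telescopes it into a closed form in `x ^ (n + 1)`, `a (n + 1)` and `a n`.
Subtracting the two closed forms gives the identity. -/

lemma lucas_two_mul_add_two (m : ℕ) :
    lucas (2 * (m + 2)) = 3 * lucas (2 * (m + 1)) - lucas (2 * m) := by
  rw [show 2 * (m + 2) = 2 * m + 1 + 1 + 1 + 1 by ring, show 2 * (m + 1) = 2 * m + 1 + 1 by ring]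
  simp only [lucas]
  ring

theorem charPoly_mul_sum_range_pow_mul_of_recurrence {R : Type*} [CommRing R] (a : ℕ → R)
    (s t x : R) (ha : ∀ m, a (m + 2) = s * a (m + 1) + t * a m) (n : ℕ) :
    (x ^ 2 - s * x - t) * ∑ k ∈ Finset.range (n + 1), x ^ k * a (n - k) =
      ((x - s) * a 0 + a 1) * x ^ (n + 1) - x * a (n + 1) - t * a n := by
  induction n with
  | zero => simp only [zero_add, Finset.sum_range_one, pow_zero, one_mul, Nat.sub_zero]; ring
  | succ n ih =>
    have hshift : ∑ k ∈ Finset.range (n + 2), x ^ k * a (n + 1 - k) =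
        x * ∑ k ∈ Finset.range (n + 1), x ^ k * a (n - k) + a (n + 1) := by
      rw [Finset.sum_range_succ', Finset.mul_sum]
      simp only [Nat.add_sub_add_right, pow_succ, pow_zero, one_mul, Nat.sub_zero]
      congr 1
      exact Finset.sum_congr rfl fun k _ => by ring
    rw [hshift, mul_add, mul_left_comm, ih, ha]
    ring

theorem stmt17 (n : ℕ) (hn : 1 ≤ n) :
    3 * (lucas (2*n-2) : ℚ) =
      (4:ℚ)^(n:ℤ) + 8 * (4:ℚ)^(-(n:ℤ)) -
        ∑ k ∈ Finset.range n, ((4:ℚ)^(k:ℤ) - (4:ℚ)^(-(k:ℤ))) * (lucas (2*(n-k-1)) : ℚ) := by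
  obtain ⟨m, rfl⟩ : ∃ m, n = m + 1 := ⟨n - 1, by omega⟩
  set a : ℕ → ℚ := fun j => (lucas (2 * j) : ℚ)
  have ha : ∀ j, a (j + 2) = 3 * a (j + 1) + (-1) * a j := fun j => by
    simp only [a, lucas_two_mul_add_two]; push_cast; ring
  have h4 := charPoly_mul_sum_range_pow_mul_of_recurrence a 3 (-1) 4 ha m
  have h4inv := charPoly_mul_sum_range_pow_mul_of_recurrence a 3 (-1) 4⁻¹ ha m
  have hsum : ∑ k ∈ Finset.range (m + 1),
      ((4:ℚ) ^ (k:ℤ) - (4:ℚ) ^ (-(k:ℤ))) * (lucas (2 * (m + 1 - k - 1)) : ℚ) =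
      ∑ k ∈ Finset.range (m + 1), (4:ℚ) ^ k * a (m - k) -
        ∑ k ∈ Finset.range (m + 1), (4:ℚ)⁻¹ ^ k * a (m - k) := by
    rw [← Finset.sum_sub_distrib]
    refine Finset.sum_congr rfl fun k _ => ?_
    rw [show m + 1 - k - 1 = m - k by omega, zpow_neg, zpow_natCast, inv_pow]
    ring
  have ha0 : a 0 = 2 := rfl
  have ha1 : a 1 = 3 := by norm_num [a, lucas]
  rw [hsum, show 2 * (m + 1) - 2 = 2 * m by omega, zpow_neg, zpow_natCast, ← inv_pow]
  rw [ha0, ha1] at h4 h4inv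
  change 3 * a m = _
  norm_num at h4 h4inv ⊢
  linarith
end

section
/- For every integer n ≥ 0, 11·Σ_{k=1}^{n} F_{4k}·L_{6(n−k)} = 3·L_{6n} − 2·F_{4n+4} + 18·F_{4n}, where F and L denote Fibonacci and Lucas numbers. -/
/-!
Write `a k = F_{4k}` and `b m = L_{6m}`. Since `b` satisfies `b (m + 2) = 18 b (m + 1) - b m`,
the convolution `S n = ∑_{k=1}^{n} a k b (n - k)` satisfies the same recurrence up to a forcing
term built from the two newest values of `a`, namely `S (n + 2) = 18 S (n + 1) - S n + 2 a (n + 2)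
- 18 a (n + 1)`. Because `a (n + 2) = 7 a (n + 1) - a n`, eleven times this forcing term is also
what the right-hand side produces under `v ↦ v (n + 2) - 18 v (n + 1) + v n`, so both sides agree
once they agree for `n = 0, 1`.
-/

open Finset

section Recurrence

variable {R : Type*} [CommRing R]

theorem sum_Icc_one_mul_sub_add_two (a b : ℕ → R) (p q : R)
    (hb : ∀ m, b (m + 2) = p * b (m + 1) + q * b m) (n : ℕ) :
    ∑ k ∈ Icc 1 (n + 2), a k * b (n + 2 - k) =
      p * ∑ k ∈ Icc 1 (n + 1), a k * b (n + 1 - k) + q * ∑ k ∈ Icc 1 n, a k * b (n - k)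
        + a (n + 2) * b 0 + a (n + 1) * (b 1 - p * b 0) := by
  have hsplit : ∀ k ∈ Icc 1 n, a k * b (n + 2 - k) =
      p * (a k * b (n + 1 - k)) + q * (a k * b (n - k)) := by
    intro k hk
    have hkn : k ≤ n := (mem_Icc.mp hk).2
    rw [show n + 2 - k = n - k + 2 by omega, show n + 1 - k = n - k + 1 by omega, hb]
    ring
  rw [sum_Icc_succ_top (by omega), sum_Icc_succ_top (by omega), sum_Icc_succ_top (by omega),
    sum_congr rfl hsplit, sum_add_distrib, ← mul_sum, ← mul_sum]
  simp only [Nat.sub_self, show n + 2 - (n + 1) = 1 by omega]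
  ring

theorem eq_of_add_two_eq {u v : ℕ → R} (p q : R) (f : ℕ → R)
    (hu : ∀ n, u (n + 2) = p * u (n + 1) + q * u n + f n)
    (hv : ∀ n, v (n + 2) = p * v (n + 1) + q * v n + f n)
    (h0 : u 0 = v 0) (h1 : u 1 = v 1) (n : ℕ) : u n = v n := by
  induction n using Nat.twoStepInduction with
  | zero => exact h0
  | one => exact h1
  | more n ihn ihn1 => rw [hu, hv, ihn, ihn1]

variable {x : ℕ → R}

theorem add_eight_eq_of_add_two_eq (hx : ∀ m, x (m + 2) = x (m + 1) + x m) (m : ℕ) :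
    x (m + 8) = 7 * x (m + 4) - x m := by
  simp only [hx]
  ring

theorem add_twelve_eq_of_add_two_eq (hx : ∀ m, x (m + 2) = x (m + 1) + x m) (m : ℕ) :
    x (m + 12) = 18 * x (m + 6) - x m := by
  simp only [hx]
  ring

end Recurrence

theorem fib_four_mul_add_two (k : ℕ) :
    (Nat.fib (4 * (k + 2)) : ℤ) = 7 * Nat.fib (4 * (k + 1)) - Nat.fib (4 * k) :=
  add_eight_eq_of_add_two_eq (x := fun m => (Nat.fib m : ℤ))
    (fun m => by rw [Nat.fib_add_two, Nat.cast_add, add_comm]) (4 * k)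

theorem lucas_six_mul_add_two (k : ℕ) :
    lucas (6 * (k + 2)) = 18 * lucas (6 * (k + 1)) - lucas (6 * k) :=
  add_twelve_eq_of_add_two_eq (fun m => by rw [lucas]) (6 * k)

theorem stmt18 (n : ℕ) :
    11 * ∑ k ∈ Finset.Icc 1 n, (Nat.fib (4*k) : ℤ) * lucas (6*(n-k)) =
      3 * lucas (6*n) - 2 * (Nat.fib (4*n+4) : ℤ) + 18 * (Nat.fib (4*n) : ℤ) := by
  set a : ℕ → ℤ := fun k => Nat.fib (4 * k)
  set b : ℕ → ℤ := fun m => lucas (6 * m)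
  have hb : ∀ m, b (m + 2) = 18 * b (m + 1) + -1 * b m := fun m => by
    simp only [b, lucas_six_mul_add_two]; ring
  refine eq_of_add_two_eq (u := fun n => 11 * ∑ k ∈ Icc 1 n, a k * b (n - k))
    (v := fun n => 3 * b n - 2 * a (n + 1) + 18 * a n) 18 (-1)
    (fun n => 11 * (2 * a (n + 2) - 18 * a (n + 1))) (fun n => ?_) (fun n => ?_) rfl (by decide) n
  · have hb0 : b 0 = 2 := rfl
    have hb1 : b 1 = 18 := rfl
    simp only [sum_Icc_one_mul_sub_add_two a b 18 (-1) hb, hb0, hb1]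
    ring
  · linear_combination 3 * hb n - 2 * fib_four_mul_add_two (n + 1) + 18 * fib_four_mul_add_two n
end
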